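/- Let ρ, σ be quantum states on ℂ^d and set ε = (1/2)‖ρ − σ‖₁. Then there exist quantum states ω, Δ₊, Δ₋ on ℂ^d such that ω = (1/(1+ε)) ρ + (ε/(1+ε)) Δ₋ and ω = (1/(1+ε)) σ + (ε/(1+ε)) Δ₊. -/

import Mathlib

open scoped BigOperators ComplexOrder Classical

noncomputable section

/-- Shannon entropy of a finitely supported distribution, with `0 log 0 = 0`. -/
def shannonEntropy {ι : Type*} [Fintype ι] (p : ι → ℝ) : ℝ :=
  -∑ i, p i * Real.log (p i)

/-- A quantum state: positive semidefinite with unit trace. -/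
def IsState {n : Type*} [Fintype n] (ρ : Matrix n n ℂ) : Prop :=
  ρ.PosSemidef ∧ ρ.trace = 1

/-- A POVM: positive semidefinite elements summing to the identity. -/
def IsPOVM {ι n : Type*} [Fintype ι] [Fintype n] [DecidableEq n]
    (M : ι → Matrix n n ℂ) : Prop :=
  (∀ i, (M i).PosSemidef) ∧ ∑ i, M i = 1

/-- Observational entropy `S_M(ρ) = -∑ p_i log (p_i / V_i)`. -/
def obsEntropy {ι n : Type*} [Fintype ι] [Fintype n]
    (M : ι → Matrix n n ℂ) (ρ : Matrix n n ℂ) : ℝ :=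
  -∑ i, ((M i * ρ).trace.re * Real.log ((M i * ρ).trace.re / (M i).trace.re))

/-- The function `g(x) = -x log x + (1+x) log(1+x)`. -/
def gFun (x : ℝ) : ℝ := -(x * Real.log x) + (1 + x) * Real.log (1 + x)

/-- Trace norm of a square complex matrix. -/
def traceNorm {n : Type*} [Fintype n] [DecidableEq n] (X : Matrix n n ℂ) : ℝ :=
  ((Matrix.isHermitian_conjTranspose_mul_self X).eigenvectorUnitary.1 *
    Matrix.diagonal (fun i => (Real.sqrt ((Matrix.isHermitian_conjTranspose_mul_self X).eigenvalues i) : ℂ)) *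
    (star (Matrix.isHermitian_conjTranspose_mul_self X).eigenvectorUnitary : Matrix n n ℂ)).trace.re

/-- Matrix logarithm of a Hermitian matrix via the spectral decomposition,
with the convention `log 0 = 0` on the kernel; junk value `0` on non-Hermitian input. -/
def matLog {n : Type*} [Fintype n] [DecidableEq n] (A : Matrix n n ℂ) : Matrix n n ℂ :=
  if hA : A.IsHermitian then
    (hA.eigenvectorUnitary : Matrix n n ℂ) *
      Matrix.diagonal (fun i => (Real.log (hA.eigenvalues i) : ℂ)) *
      (star (hA.eigenvectorUnitary : Matrix n n ℂ))
  else 0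

/-- Von Neumann entropy `S(ρ) = -tr(ρ log ρ)`. -/
def vnEntropy {n : Type*} [Fintype n] [DecidableEq n] (ρ : Matrix n n ℂ) : ℝ :=
  -((ρ * matLog ρ).trace.re)

/-- Quantum relative entropy, as an extended real number: `tr(μ (log μ - log ν))` when
`supp μ ⊆ supp ν` (both Hermitian), and `+∞` otherwise. -/
def qRelEntropy {n : Type*} [Fintype n] [DecidableEq n] (μ ν : Matrix n n ℂ) : EReal :=
  if μ.IsHermitian ∧ ν.IsHermitian ∧
      LinearMap.range (Matrix.toLin' μ) ≤ LinearMap.range (Matrix.toLin' ν) then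
    (((μ * (matLog μ - matLog ν)).trace.re : ℝ) : EReal)
  else ⊤

/-- Real-valued quantum relative entropy `tr(μ (log μ - log ν))` (meaningful when
`supp μ ⊆ supp ν`). -/
def qRelEntropyR {n : Type*} [Fintype n] [DecidableEq n] (μ ν : Matrix n n ℂ) : ℝ :=
  (μ * (matLog μ - matLog ν)).trace.re

/-! Write `ρ - σ = P - N` with `P = (ρ - σ)⁺` and `N = (ρ - σ)⁻` positive semidefinite. Since
`tr (ρ - σ) = 0` and `P + N = |ρ - σ|`, both `P` and `N` have trace `ε`, so `Δ₊ = P / ε` and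
`Δ₋ = N / ε` are states, and `ω = (ρ + N) / (1 + ε) = (σ + P) / (1 + ε)`. If `ε = 0` then
`ρ = σ`, and `ω = Δ₊ = Δ₋ = ρ` works. -/

open scoped MatrixOrder

section

variable {n : Type*} [Fintype n]

theorem Matrix.PosSemidef.ofReal_re_trace {P : Matrix n n ℂ} (hP : P.PosSemidef) :
    ((P.trace.re : ℝ) : ℂ) = P.trace :=
  (Complex.eq_re_of_ofReal_le (by rw [Complex.ofReal_zero]; exact hP.trace_nonneg)).symm

theorem trace_negPart_eq_trace_posPart {A : Matrix n n ℂ} (hA : IsSelfAdjoint A)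
    (h0 : A.trace = 0) : A⁻.trace = A⁺.trace := by
  rw [eq_comm, ← sub_eq_zero, ← Matrix.trace_sub, CFC.posPart_sub_negPart A hA, h0]

theorem isState_inv_smul {P : Matrix n n ℂ} (hP : P.PosSemidef) {t : ℝ}
    (ht : P.trace = t) (ht0 : 0 < t) : IsState (t⁻¹ • P) := by
  refine ⟨hP.smul (inv_nonneg.mpr ht0.le), ?_⟩
  rw [Matrix.trace_smul, ht, Complex.real_smul, ← Complex.ofReal_mul, inv_mul_cancel₀ ht0.ne',
    Complex.ofReal_one]

variable [DecidableEq n]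

theorem traceNorm_eq_re_trace_abs (A : Matrix n n ℂ) : traceNorm A = (CFC.abs A).trace.re := by
  have hAA := Matrix.isHermitian_conjTranspose_mul_self A
  rw [CFC.abs, Matrix.star_eq_conjTranspose, CFC.sqrt_eq_real_sqrt _
      (Matrix.nonneg_iff_posSemidef.mpr (Matrix.posSemidef_conjTranspose_mul_self A)),
    cfcₙ_eq_cfc, hAA.cfc_eq, Matrix.IsHermitian.cfc, Unitary.conjStarAlgAut_apply]
  rfl

theorem ofReal_traceNorm (A : Matrix n n ℂ) : (traceNorm A : ℂ) = (CFC.abs A).trace := by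
  rw [traceNorm_eq_re_trace_abs]
  exact (Matrix.nonneg_iff_posSemidef.mp (CFC.abs_nonneg A)).ofReal_re_trace

theorem trace_posPart_of_trace_eq_zero {A : Matrix n n ℂ} (hA : IsSelfAdjoint A)
    (h0 : A.trace = 0) : A⁺.trace = (traceNorm A / 2 : ℝ) := by
  have hadd : A⁺.trace + A⁻.trace = traceNorm A := by
    rw [← Matrix.trace_add, CFC.posPart_add_negPart A hA, ofReal_traceNorm]
  rw [trace_negPart_eq_trace_posPart hA h0] at hadd
  push_cast
  linear_combination hadd / 2

theorem IsState.exists_jordan_decomposition {ρ σ : Matrix n n ℂ} (hρ : IsState ρ)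
    (hσ : IsState σ) : ∃ P N : Matrix n n ℂ, P.PosSemidef ∧ N.PosSemidef ∧ ρ + N = σ + P ∧
      P.trace = (traceNorm (ρ - σ) / 2 : ℝ) ∧ N.trace = (traceNorm (ρ - σ) / 2 : ℝ) := by
  have hsa : IsSelfAdjoint (ρ - σ) := hρ.1.isHermitian.sub hσ.1.isHermitian
  have htr0 : (ρ - σ).trace = 0 := by rw [Matrix.trace_sub, hρ.2, hσ.2, sub_self]
  refine ⟨(ρ - σ)⁺, (ρ - σ)⁻, Matrix.nonneg_iff_posSemidef.mp (CFC.posPart_nonneg _),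
    Matrix.nonneg_iff_posSemidef.mp (CFC.negPart_nonneg _), ?_,
    trace_posPart_of_trace_eq_zero hsa htr0, ?_⟩
  · rw [add_comm σ, ← sub_eq_sub_iff_add_eq_add]
    exact (CFC.posPart_sub_negPart _ hsa).symm
  · rw [trace_negPart_eq_trace_posPart hsa htr0, trace_posPart_of_trace_eq_zero hsa htr0]

end

theorem omega_delta_decomposition {d : ℕ} (ρ σ : Matrix (Fin d) (Fin d) ℂ)
    (hρ : IsState ρ) (hσ : IsState σ) (ε : ℝ) (hε : ε = (1/2) * traceNorm (ρ - σ)) :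
    ∃ ω Δp Δm : Matrix (Fin d) (Fin d) ℂ,
      IsState ω ∧ IsState Δp ∧ IsState Δm ∧
      ω = (1/(1+ε)) • ρ + (ε/(1+ε)) • Δm ∧
      ω = (1/(1+ε)) • σ + (ε/(1+ε)) • Δp := by
  obtain ⟨P, N, hP, hN, hjordan, htrP, htrN⟩ := hρ.exists_jordan_decomposition hσ
  rw [show traceNorm (ρ - σ) / 2 = ε by rw [hε]; ring] at htrP htrN
  rcases (Complex.zero_le_real.mp (htrP ▸ hP.trace_nonneg)).eq_or_lt with hε0 | hεpos
  · subst hε0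
    have hρσ : ρ = σ := by
      rwa [hP.trace_eq_zero_iff.mp (by rw [htrP, Complex.ofReal_zero]),
        hN.trace_eq_zero_iff.mp (by rw [htrN, Complex.ofReal_zero]), add_zero, add_zero] at hjordan
    subst hρσ
    exact ⟨ρ, ρ, ρ, hρ, hρ, hρ, by simp, by simp⟩
  · have mix : ∀ X Y : Matrix (Fin d) (Fin d) ℂ,
        (1/(1+ε)) • X + (ε/(1+ε)) • (ε⁻¹ • Y) = (1+ε)⁻¹ • (X + Y) := by
      intro X Y
      rw [smul_smul, show ε / (1 + ε) * ε⁻¹ = (1 + ε)⁻¹ by field_simp, one_div, smul_add]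
    refine ⟨(1+ε)⁻¹ • (ρ + N), ε⁻¹ • P, ε⁻¹ • N, isState_inv_smul (hρ.1.add hN) ?_ (by positivity),
      isState_inv_smul hP htrP hεpos, isState_inv_smul hN htrN hεpos, (mix ρ N).symm, ?_⟩
    · rw [Matrix.trace_add, hρ.2, htrN]; push_cast; ring
    · rw [mix, hjordan]
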